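/- (Theorem 5, part ii) Let (Ω, 𝓕, P) be a probability space, B > 0, c ≥ 0, and (Tₘ)_{m≥1} a sequence of random variables on Ω with Tₘ ~ Gamma(shape m, rate B) for each m. Then exp(−m·c/Tₘ) converges in probability to exp(−c·B) as m → ∞. That is, the maximum likelihood estimator F̂ of the CDF F(x;θ) = exp(−B(θ)A(x)) based on m lower record values is a consistent estimator of F(x;θ). -/

import Mathlib

/-!
A `Gamma(m, B)` variable has mean `m / B` and variance `m / B²`, so Chebyshev's inequality gives
`P (ε ≤ |Tₘ / m - 1 / B|) ≤ 1 / (m B² ε²) → 0`, i.e. `Tₘ / m → 1 / B` in probability. Since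
`exp (-m c / Tₘ) = g (Tₘ / m)` for `g y = exp (-c / y)`, which is continuous at `1 / B`, the claim
follows by the continuous mapping theorem for a constant limit.
-/

open MeasureTheory ProbabilityTheory Filter Real Set Topology

section GammaMoments

variable {a r : ℝ}

lemma gammaPDFReal_of_neg {x : ℝ} (hx : x < 0) : gammaPDFReal a r x = 0 :=
  if_neg (not_le.mpr hx)

lemma integral_gammaMeasure (ha : 0 < a) (hr : 0 < r) (f : ℝ → ℝ) :
    ∫ x, f x ∂gammaMeasure a r = ∫ x in Ioi 0, gammaPDFReal a r x * f x := by
  rw [gammaMeasure, integral_withDensity_eq_integral_toReal_smul (f := gammaPDF a r)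
    (measurable_gammaPDFReal a r).ennreal_ofReal (ae_of_all _ fun _ => ENNReal.ofReal_lt_top)]
  simp only [gammaPDF, ENNReal.toReal_ofReal (gammaPDFReal_nonneg ha hr _), smul_eq_mul]
  rw [← integral_Ici_eq_integral_Ioi, setIntegral_eq_integral_of_forall_compl_eq_zero]
  intro x hx
  rw [gammaPDFReal_of_neg (not_le.mp hx), zero_mul]

lemma gammaPDFReal_mul_pow (k : ℕ) {x : ℝ} (hx : 0 < x) :
    gammaPDFReal a r x * x ^ k = r ^ a / Gamma a * (x ^ (a + k - 1) * exp (-(r * x))) := by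
  rw [gammaPDFReal, if_pos hx.le, ← rpow_natCast x k, add_sub_right_comm, rpow_add hx]
  ring

lemma integral_pow_gammaMeasure (ha : 0 < a) (hr : 0 < r) (k : ℕ) :
    ∫ x, x ^ k ∂gammaMeasure a r = Gamma (a + k) / (Gamma a * r ^ k) := by
  rw [integral_gammaMeasure ha hr,
    setIntegral_congr_fun measurableSet_Ioi fun x hx => gammaPDFReal_mul_pow k hx,
    integral_const_mul, integral_rpow_mul_exp_neg_mul_Ioi (by positivity) hr,
    one_div, inv_rpow hr.le, rpow_add hr, rpow_natCast]
  have := (Gamma_pos_of_pos ha).ne'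
  field_simp

lemma integrable_pow_gammaMeasure (ha : 0 < a) (hr : 0 < r) (k : ℕ) :
    Integrable (fun x => x ^ k) (gammaMeasure a r) := by
  refine .of_integral_ne_zero ?_
  rw [integral_pow_gammaMeasure ha hr]
  have := Gamma_pos_of_pos (add_pos_of_pos_of_nonneg ha k.cast_nonneg)
  have := Gamma_pos_of_pos ha
  positivity

lemma memLp_id_gammaMeasure (ha : 0 < a) (hr : 0 < r) : MemLp id 2 (gammaMeasure a r) :=
  (memLp_two_iff_integrable_sq aestronglyMeasurable_id).2 (integrable_pow_gammaMeasure ha hr 2)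

lemma integral_id_gammaMeasure (ha : 0 < a) (hr : 0 < r) : ∫ x, x ∂gammaMeasure a r = a / r := by
  have h := integral_pow_gammaMeasure ha hr 1
  simp only [pow_one, Nat.cast_one, Gamma_add_one ha.ne'] at h
  rw [h]
  have := (Gamma_pos_of_pos ha).ne'
  field_simp

lemma variance_id_gammaMeasure (ha : 0 < a) (hr : 0 < r) :
    Var[id; gammaMeasure a r] = a / r ^ 2 := by
  have := isProbabilityMeasure_gammaMeasure ha hr
  have h2 := integral_pow_gammaMeasure ha hr 2
  rw [show a + ((2 : ℕ) : ℝ) = a + 1 + 1 by push_cast; ring, Gamma_add_one (by positivity),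
    Gamma_add_one ha.ne'] at h2
  rw [variance_eq_sub (memLp_id_gammaMeasure ha hr)]
  simp only [Pi.pow_apply, id_eq]
  rw [h2, integral_id_gammaMeasure ha hr]
  have := (Gamma_pos_of_pos ha).ne'
  field_simp
  ring

lemma gammaMeasure_abs_sub_ge_le (ha : 0 < a) (hr : 0 < r) {η : ℝ} (hη : 0 < η) :
    gammaMeasure a r {x | η ≤ |x - a / r|} ≤ ENNReal.ofReal (a / r ^ 2 / η ^ 2) := by
  have := isProbabilityMeasure_gammaMeasure ha hr
  simpa [integral_id_gammaMeasure ha hr, variance_id_gammaMeasure ha hr] using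
    meas_ge_le_variance_div_sq (memLp_id_gammaMeasure ha hr) hη

end GammaMoments

lemma MeasureTheory.TendstoInMeasure.comp_continuousAt_const {α ι E F : Type*}
    [MeasurableSpace α] [PseudoMetricSpace E] [PseudoMetricSpace F] {μ : Measure α} {l : Filter ι}
    {f : ι → α → E} {y : E} {g : E → F} (hf : TendstoInMeasure μ f l fun _ => y)
    (hg : ContinuousAt g y) :
    TendstoInMeasure μ (fun i x => g (f i x)) l fun _ => g y := by
  rw [tendstoInMeasure_iff_dist] at hf ⊢
  intro ε hε
  obtain ⟨δ, hδ, hgδ⟩ := Metric.continuousAt_iff.mp hg ε hε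
  refine tendsto_of_tendsto_of_tendsto_of_le_of_le tendsto_const_nhds (hf δ hδ)
    (fun _ => zero_le) fun i => measure_mono fun x hx =>
      not_lt.mp fun hxδ => (hgδ hxδ).not_ge hx

lemma tendstoInMeasure_div_of_map_eq_gammaMeasure {Ω : Type*} [MeasurableSpace Ω]
    {P : Measure Ω} {B : ℝ} (hB : 0 < B) {T : ℕ → Ω → ℝ}
    (hT : ∀ m : ℕ, 1 ≤ m → P.map (T m) = gammaMeasure m B) :
    TendstoInMeasure P (fun m ω => T m ω / m) atTop fun _ => 1 / B := by
  rw [tendstoInMeasure_iff_dist]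
  intro ε hε
  have hbound : ∀ᶠ m : ℕ in atTop,
      P {ω | ε ≤ dist (T m ω / m) (1 / B)} ≤ ENNReal.ofReal ((B ^ 2 * ε ^ 2)⁻¹ / m) := by
    filter_upwards [eventually_ge_atTop 1] with m hm
    have hm0 : (0 : ℝ) < m := by exact_mod_cast hm
    have := isProbabilityMeasure_gammaMeasure hm0 hB
    have hTm : AEMeasurable (T m) P :=
      aemeasurable_of_map_neZero (by rw [hT m hm]; infer_instance)
    have hset : {ω | ε ≤ dist (T m ω / m) (1 / B)} = T m ⁻¹' {x | m * ε ≤ |x - m / B|} := by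
      ext ω
      rw [mem_ofPred_eq, mem_preimage, mem_ofPred_eq, Real.dist_eq,
        show T m ω / m - 1 / B = (T m ω - m / B) / m by field_simp, abs_div, abs_of_pos hm0,
        le_div_iff₀ hm0, mul_comm]
    rw [hset, ← Measure.map_apply_of_aemeasurable hTm
      (measurableSet_le (by fun_prop) (by fun_prop)), hT m hm]
    refine (gammaMeasure_abs_sub_ge_le hm0 hB (η := m * ε) (by positivity)).trans_eq ?_
    congr 1
    field_simp
  refine tendsto_of_tendsto_of_tendsto_of_le_of_le' tendsto_const_nhds ?_
    (Eventually.of_forall fun _ => zero_le) hbound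
  simpa only [ENNReal.ofReal_zero] using
    ENNReal.tendsto_ofReal (tendsto_const_div_atTop_nhds_zero_nat (B ^ 2 * ε ^ 2)⁻¹)

theorem cdf_mle_consistent_general {Ω : Type*} [MeasurableSpace Ω]
    (P : Measure Ω) (B c : ℝ) (hB : 0 < B)
    (T : ℕ → Ω → ℝ)
    (hT : ∀ m : ℕ, 1 ≤ m → Measure.map (T m) P = gammaMeasure (m : ℝ) B) :
    ∀ ε : ℝ, 0 < ε →
      Tendsto (fun m : ℕ =>
          P {ω | ε < |Real.exp (-((m : ℝ) * c / T m ω)) - Real.exp (-(c * B))|})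
        atTop (nhds 0) := by
  intro ε hε
  have hg : ContinuousAt (fun y : ℝ => exp (-(c / y))) (1 / B) :=
    ((continuousAt_const.div continuousAt_id (one_div_pos.mpr hB).ne').neg).rexp
  have h := (tendstoInMeasure_div_of_map_eq_gammaMeasure hB hT).comp_continuousAt_const hg
  rw [tendstoInMeasure_iff_dist] at h
  refine tendsto_of_tendsto_of_tendsto_of_le_of_le tendsto_const_nhds (h ε hε)
    (fun _ => zero_le) fun m => measure_mono fun ω hω => ?_
  -- `c / (T / m) = c * m / T` holds also at `m = 0`, where both sides are `0`.
  simp only [mem_ofPred_eq, Real.dist_eq, div_div_eq_mul_div, div_one, mul_comm c] at hω ⊢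
  exact hω.le

/-- Theorem 5, part ii: if `Tₘ ~ Gamma(shape m, rate B)` for each `m ≥ 1`, then
`exp(-m c / Tₘ) → exp(-c B)` in probability: the MLE of the CDF based on `m` lower record
values is consistent. -/
theorem cdf_mle_consistent {Ω : Type*} [MeasurableSpace Ω]
    (P : Measure Ω) [IsProbabilityMeasure P] (B c : ℝ) (hB : 0 < B) (hc : 0 ≤ c)
    (T : ℕ → Ω → ℝ)
    (hT : ∀ m : ℕ, 1 ≤ m → Measure.map (T m) P = gammaMeasure (m : ℝ) B) :
    ∀ ε : ℝ, 0 < ε →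
      Tendsto (fun m : ℕ =>
          P {ω | ε < |Real.exp (-((m : ℝ) * c / T m ω)) - Real.exp (-(c * B))|})
        atTop (nhds 0) :=
  cdf_mle_consistent_general P B c hB T hT
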